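/- arXiv:1903.00974 — 6 statements merged into one kernel-verified Lean document; each statement's English description precedes it below -/
import Mathlib

section
/- (Deterministic anytime online-to-batch, core of Theorem 1.) If ℒ : E → ℝ is convex and for each 1 ≤ t ≤ T the vector g_t satisfies g_t ∈ ∂ℒ(x_t), then for every x⋆ ∈ D: α_{1:T} (ℒ(x_T) − ℒ(x⋆)) ≤ Σ_{t=1}^T α_t ⟨g_t, w_t − x⋆⟩. -/
/-!
Write `A t = α_{1:t}`. Since `A t • x t = A (t-1) • x (t-1) + α t • w t`, the regret term
splits as `α t (w t - x⋆) = α t (x t - x⋆) + A (t-1) (x t - x (t-1))`. Pairing with the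
subgradient `g t` at `x t` bounds `α t ⟪g t, w t - x⋆⟫` from below by
`A t (ℒ(x t) - ℒ(x⋆)) - A (t-1) (ℒ(x (t-1)) - ℒ(x⋆))`, and these lower bounds telescope.
-/

open Finset

open scoped RealInnerProductSpace

theorem Finset.sum_smul_centerMass_of_nonneg {ι R M : Type*} [Field R] [LinearOrder R]
    [IsStrictOrderedRing R] [AddCommGroup M] [Module R M] {s : Finset ι} {w : ι → R}
    (hw : ∀ i ∈ s, 0 ≤ w i) (z : ι → M) :
    (∑ i ∈ s, w i) • s.centerMass w z = ∑ i ∈ s, w i • z i := by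
  rcases eq_or_ne (∑ i ∈ s, w i) 0 with hzero | hne
  · have hw0 := (sum_eq_zero_iff_of_nonneg hw).1 hzero
    rw [hzero, zero_smul]
    exact (sum_eq_zero fun i hi => by rw [hw0 i hi, zero_smul]).symm
  · exact smul_inv_smul₀ hne _

section Subgradient

variable {E : Type*} [NormedAddCommGroup E] [InnerProductSpace ℝ E]

def HasSubgradientAt (f : E → ℝ) (g x : E) : Prop :=
  ∀ y, f x + ⟪g, y - x⟫ ≤ f y

variable {f : E → ℝ} {g y : E}

theorem HasSubgradientAt.sub_le_inner (h : HasSubgradientAt f g y) (z : E) :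
    f y - f z ≤ ⟪g, y - z⟫ := by
  have := h z
  rw [← neg_sub y z, inner_neg_right] at this
  linarith

theorem HasSubgradientAt.averaging_step_le (h : HasSubgradientAt f g y) {y₀ w : E} {a b : ℝ}
    (ha : 0 ≤ a) (hb : 0 ≤ b) (hy : (b + a) • y = b • y₀ + a • w) (z : E) :
    (b + a) * (f y - f z) - b * (f y₀ - f z) ≤ a * ⟪g, w - z⟫ := by
  have hsplit : a • (w - z) = a • (y - z) + b • (y - y₀) := by
    linear_combination (norm := module) -hy
  have hinner : a * ⟪g, w - z⟫ = a * ⟪g, y - z⟫ + b * ⟪g, y - y₀⟫ := by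
    rw [← real_inner_smul_right, ← real_inner_smul_right, ← real_inner_smul_right,
      ← inner_add_right, hsplit]
  have hz := mul_le_mul_of_nonneg_left (h.sub_le_inner z) ha
  have hy₀ := mul_le_mul_of_nonneg_left (h.sub_le_inner y₀) hb
  linarith

theorem weighted_suboptimality_le_sum_inner {T : ℕ} {α : ℕ → ℝ} {w x g : ℕ → E}
    (hα : ∀ t, 1 ≤ t → t ≤ T → 0 ≤ α t)
    (hx : ∀ t ≤ T, (∑ i ∈ Icc 1 t, α i) • x t = ∑ i ∈ Icc 1 t, α i • w i)
    (hg : ∀ t, 1 ≤ t → t ≤ T → HasSubgradientAt f (g t) (x t)) (z : E) :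
    (∑ t ∈ Icc 1 T, α t) * (f (x T) - f z) ≤
      ∑ t ∈ Icc 1 T, α t * ⟪g t, w t - z⟫ := by
  induction T with
  | zero => simp
  | succ T ih =>
    have hprev := ih (fun t h1 h2 => hα t h1 (by omega)) (fun t h => hx t (by omega))
      (fun t h1 h2 => hg t h1 (by omega))
    have hy := hx (T + 1) le_rfl
    rw [sum_Icc_succ_top (by omega), sum_Icc_succ_top (by omega), ← hx T (by omega)] at hy
    have hstep := (hg (T + 1) (by omega) le_rfl).averaging_step_le (hα (T + 1) (by omega) le_rfl)
      (sum_nonneg fun i hi => hα i (mem_Icc.1 hi).1 ((mem_Icc.1 hi).2.trans T.le_succ)) hy z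
    rw [sum_Icc_succ_top (by omega), sum_Icc_succ_top (by omega)]
    linarith

end Subgradient

theorem anytime_online_to_batch_deterministic_general
    {E : Type*} [NormedAddCommGroup E] [InnerProductSpace ℝ E]
    (T : ℕ)
    (α : ℕ → ℝ) (hα : ∀ t, 1 ≤ t → t ≤ T → 0 ≤ α t)
    (w : ℕ → E)
    (x : ℕ → E)
    (hx : ∀ t, 1 ≤ t → t ≤ T →
      x t = (∑ i ∈ Finset.Icc 1 t, α i)⁻¹ • ∑ i ∈ Finset.Icc 1 t, α i • w i)
    (f : E → ℝ)
    (g : ℕ → E)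
    (hg : ∀ t, 1 ≤ t → t ≤ T → ∀ y : E, f y ≥ f (x t) + ⟪g t, y - x t⟫)
    (xstar : E) :
    (∑ t ∈ Finset.Icc 1 T, α t) * (f (x T) - f xstar)
      ≤ ∑ t ∈ Finset.Icc 1 T, α t * ⟪g t, w t - xstar⟫ := by
  refine weighted_suboptimality_le_sum_inner hα (fun t ht => ?_) hg xstar
  rcases Nat.eq_zero_or_pos t with rfl | ht₁
  · simp
  · rw [hx t ht₁ ht]
    exact sum_smul_centerMass_of_nonneg
      (fun i hi => hα i (mem_Icc.1 hi).1 ((mem_Icc.1 hi).2.trans ht)) w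

/-- Deterministic anytime online-to-batch, core of Theorem 1. -/
theorem anytime_online_to_batch_deterministic
    {E : Type*} [NormedAddCommGroup E] [InnerProductSpace ℝ E]
    (D : Set E) (hD : Convex ℝ D)
    (T : ℕ) (hT : 1 ≤ T)
    (α : ℕ → ℝ) (hα : ∀ t, 1 ≤ t → t ≤ T → 0 ≤ α t) (hα1 : 0 < α 1)
    (w : ℕ → E) (hw : ∀ t, 1 ≤ t → t ≤ T → w t ∈ D)
    (x : ℕ → E)
    (hx : ∀ t, 1 ≤ t → t ≤ T →
      x t = (∑ i ∈ Finset.Icc 1 t, α i)⁻¹ • ∑ i ∈ Finset.Icc 1 t, α i • w i)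
    (f : E → ℝ) (hconv : ConvexOn ℝ Set.univ f)
    (g : ℕ → E)
    (hg : ∀ t, 1 ≤ t → t ≤ T → ∀ y : E, f y ≥ f (x t) + ⟪g t, y - x t⟫)
    (xstar : E) (hxstar : xstar ∈ D) :
    (∑ t ∈ Finset.Icc 1 T, α t) * (f (x T) - f xstar)
      ≤ ∑ t ∈ Finset.Icc 1 T, α t * ⟪g t, w t - xstar⟫ :=
  anytime_online_to_batch_deterministic_general T α hα w x hx f g hg xstar
end

section
/- (Theorem 1, in-expectation version.) Let (Ω, ℱ, P) be a probability space with a filtration (ℱ_t)_{t=1}^T, and let w_1,…,w_T : Ω → D and g_1,…,g_T : Ω → E be random variables, suitably integrable, such that for each t the variables w_1,…,w_t (hence x_t) are ℱ_t-measurable and g_1,…,g_{t−1} are ℱ_t-measurable. Suppose ℒ : E → ℝ is convex and that almost surely the conditional expectation G_t = E[g_t | ℱ_t] satisfies G_t ∈ ∂ℒ(x_t). Then for every x⋆ ∈ D: E[α_{1:T}(ℒ(x_T) − ℒ(x⋆))] ≤ E[Σ_{t=1}^T α_t ⟨g_t, w_t − x⋆⟩]. -/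
/-!
Whenever `G_t` is a subgradient of `f` at `x_t`, the averaging identity
`α_{1:t} x_t = α_{1:t-1} x_{t-1} + α_t w_t` turns the two subgradient inequalities at `x_t`
(against `x_{t-1}` and against `x⋆`) into
`α_{1:t} (f x_t - f x⋆) ≤ α_{1:t-1} (f x_{t-1} - f x⋆) + α_t ⟪G_t, w_t - x⋆⟫`,
which telescopes. Taking expectations, `G_t = E[g_t | ℱ_t]` may be replaced by `g_t`
because `w_t - x⋆` is `ℱ_t`-measurable.
-/

open MeasureTheory Finset
open scoped RealInnerProductSpace

section Subgradient

variable {E : Type*} [NormedAddCommGroup E] [InnerProductSpace ℝ E]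

def IsSubgradient (f : E → ℝ) (x G : E) : Prop :=
  ∀ y, f x + ⟪G, y - x⟫ ≤ f y

theorem IsSubgradient.mul_sub_le {f : E → ℝ} {x x' w z G : E} {A a : ℝ}
    (hG : IsSubgradient f x' G) (hA : 0 ≤ A) (ha : 0 ≤ a)
    (hx' : (A + a) • x' = A • x + a • w) :
    (A + a) * (f x' - f z) ≤ A * (f x - f z) + a * ⟪G, w - z⟫ := by
  have hinner : A * ⟪G, x' - x⟫ + a * ⟪G, x' - z⟫ = a * ⟪G, w - z⟫ := by
    rw [← real_inner_smul_right, ← real_inner_smul_right, ← inner_add_right,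
      ← real_inner_smul_right]
    congr 1
    calc A • (x' - x) + a • (x' - z) = (A + a) • x' - A • x - a • z := by module
      _ = a • (w - z) := by rw [hx']; module
  have hx := hG x
  have hz := hG z
  simp only [inner_sub_right] at hx hz hinner ⊢
  linarith [mul_le_mul_of_nonneg_left hx hA, mul_le_mul_of_nonneg_left hz ha]

theorem sum_mul_sub_le_sum_mul_inner_of_isSubgradient {f : E → ℝ} {α : ℕ → ℝ} {w x G : ℕ → E} {z : E}
    {T : ℕ} (hα : ∀ t ∈ Icc 1 T, 0 ≤ α t)
    (hx : ∀ t ∈ Icc 1 T, (∑ i ∈ Icc 1 t, α i) • x t = ∑ i ∈ Icc 1 t, α i • w i)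
    (hG : ∀ t ∈ Icc 1 T, IsSubgradient f (x t) (G t)) :
    (∑ t ∈ Icc 1 T, α t) * (f (x T) - f z) ≤ ∑ t ∈ Icc 1 T, α t * ⟪G t, w t - z⟫ := by
  induction T with
  | zero => simp
  | succ T ih =>
    have hsucc : Icc 1 T ⊆ Icc 1 (T + 1) := Icc_subset_Icc_right T.le_succ
    have hlast : T + 1 ∈ Icc 1 (T + 1) := right_mem_Icc.2 T.succ_pos
    have hxT : (∑ i ∈ Icc 1 T, α i) • x T = ∑ i ∈ Icc 1 T, α i • w i := by
      rcases T.eq_zero_or_pos with rfl | hT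
      · simp
      · exact hx T (mem_Icc.2 ⟨hT, T.le_succ⟩)
    have hstep := (hG _ hlast).mul_sub_le (z := z) (x := x T) (w := w (T + 1))
      (sum_nonneg fun i hi => hα i (hsucc hi)) (hα _ hlast)
      (by rw [← sum_Icc_succ_top T.succ_pos, hx _ hlast, sum_Icc_succ_top T.succ_pos, hxT])
    rw [sum_Icc_succ_top T.succ_pos, sum_Icc_succ_top T.succ_pos]
    have := ih (fun t ht => hα t (hsucc ht)) (fun t ht => hx t (hsucc ht))
      (fun t ht => hG t (hsucc ht))
    linarith

end Subgradient

section PullOut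

variable {Ω E : Type*} [NormedAddCommGroup E] [InnerProductSpace ℝ E] [CompleteSpace E]
  {m m0 : MeasurableSpace Ω} {P : Measure Ω}

section

variable {g h : Ω → E}

theorem inner_condExp_ae_eq_of_stronglyMeasurable (hh : StronglyMeasurable[m] h)
    (hgh : Integrable (fun ω => ⟪g ω, h ω⟫) P) (hg : Integrable g P) :
    (fun ω => ⟪(P[g|m]) ω, h ω⟫) =ᵐ[P] P[fun ω => ⟪g ω, h ω⟫|m] :=
  -- over `ℝ` the conjugate-linear `innerSL` is definitionally bilinear
  (condExp_bilin_of_stronglyMeasurable_right (innerSL ℝ : E →L[ℝ] E →L[ℝ] ℝ) hh hgh hg).symm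

theorem integrable_inner_condExp_of_stronglyMeasurable (hh : StronglyMeasurable[m] h)
    (hgh : Integrable (fun ω => ⟪g ω, h ω⟫) P) (hg : Integrable g P) :
    Integrable (fun ω => ⟪(P[g|m]) ω, h ω⟫) P :=
  integrable_condExp.congr (inner_condExp_ae_eq_of_stronglyMeasurable hh hgh hg).symm

theorem integral_inner_condExp_of_stronglyMeasurable (hm : m ≤ m0) [SigmaFinite (P.trim hm)]
    (hh : StronglyMeasurable[m] h) (hgh : Integrable (fun ω => ⟪g ω, h ω⟫) P)
    (hg : Integrable g P) :
    ∫ ω, ⟪(P[g|m]) ω, h ω⟫ ∂P = ∫ ω, ⟪g ω, h ω⟫ ∂P := by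
  rw [integral_congr_ae (inner_condExp_ae_eq_of_stronglyMeasurable hh hgh hg),
    integral_condExp hm]

end

variable {ι : Type*} {s : Finset ι} {c : ι → ℝ} {ℱ : ι → MeasurableSpace Ω} {g h : ι → Ω → E}

theorem integrable_sum_mul_inner_condExp
    (hh : ∀ i ∈ s, StronglyMeasurable[ℱ i] (h i)) (hg : ∀ i ∈ s, Integrable (g i) P)
    (hgh : ∀ i ∈ s, Integrable (fun ω => ⟪g i ω, h i ω⟫) P) :
    Integrable (fun ω => ∑ i ∈ s, c i * ⟪(P[g i|ℱ i]) ω, h i ω⟫) P :=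
  integrable_finsetSum _ fun i hi =>
    (integrable_inner_condExp_of_stronglyMeasurable (hh i hi) (hgh i hi) (hg i hi)).const_mul _

theorem integral_sum_mul_inner_condExp [IsFiniteMeasure P] (hℱ : ∀ i, ℱ i ≤ m0)
    (hh : ∀ i ∈ s, StronglyMeasurable[ℱ i] (h i)) (hg : ∀ i ∈ s, Integrable (g i) P)
    (hgh : ∀ i ∈ s, Integrable (fun ω => ⟪g i ω, h i ω⟫) P) :
    ∫ ω, ∑ i ∈ s, c i * ⟪(P[g i|ℱ i]) ω, h i ω⟫ ∂P = ∫ ω, ∑ i ∈ s, c i * ⟪g i ω, h i ω⟫ ∂P := by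
  rw [integral_finsetSum _ fun i hi =>
      (integrable_inner_condExp_of_stronglyMeasurable (hh i hi) (hgh i hi) (hg i hi)).const_mul _,
    integral_finsetSum _ fun i hi => (hgh i hi).const_mul _]
  refine sum_congr rfl fun i hi => ?_
  rw [integral_const_mul, integral_const_mul,
    integral_inner_condExp_of_stronglyMeasurable (hℱ i) (hh i hi) (hgh i hi) (hg i hi)]

end PullOut

theorem anytime_online_to_batch_in_expectation_general
    {E : Type*} [NormedAddCommGroup E] [InnerProductSpace ℝ E] [CompleteSpace E]
    {Ω : Type*} [m0 : MeasurableSpace Ω] (P : Measure Ω) [IsProbabilityMeasure P]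
    (ℱ : ℕ → MeasurableSpace Ω) (hℱle : ∀ t, ℱ t ≤ m0)
    (T : ℕ) (hT : 1 ≤ T)
    (α : ℕ → ℝ) (hα : ∀ t, 1 ≤ t → t ≤ T → 0 ≤ α t) (hα1 : 0 < α 1)
    (w g : ℕ → Ω → E)
    (hwmeas : ∀ s t, 1 ≤ s → s ≤ t → t ≤ T → StronglyMeasurable[ℱ t] (w s))
    (hgint : ∀ t, 1 ≤ t → t ≤ T → Integrable (g t) P)
    (x : ℕ → Ω → E)
    (hx : ∀ t, 1 ≤ t → t ≤ T → ∀ ω,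
      x t ω = (∑ i ∈ Finset.Icc 1 t, α i)⁻¹ • ∑ i ∈ Finset.Icc 1 t, α i • w i ω)
    (f : E → ℝ)
    (hsubgrad : ∀ t, 1 ≤ t → t ≤ T → ∀ᵐ ω ∂P, ∀ y : E,
      f y ≥ f (x t ω) + ⟪(P[g t | ℱ t]) ω, y - x t ω⟫)
    (hfint : ∀ t, 1 ≤ t → t ≤ T → Integrable (fun ω => f (x t ω)) P)
    (hinner_w : ∀ t, 1 ≤ t → t ≤ T → Integrable (fun ω => ⟪g t ω, w t ω⟫) P)
    (xstar : E) :
    ∫ ω, (∑ t ∈ Finset.Icc 1 T, α t) * (f (x T ω) - f xstar) ∂P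
      ≤ ∫ ω, ∑ t ∈ Finset.Icc 1 T, α t * ⟪g t ω, w t ω - xstar⟫ ∂P := by
  have hα' : ∀ t ∈ Icc 1 T, 0 ≤ α t := fun t ht => hα t (mem_Icc.1 ht).1 (mem_Icc.1 ht).2
  have hxsum : ∀ ω, ∀ t ∈ Icc 1 T,
      (∑ i ∈ Icc 1 t, α i) • x t ω = ∑ i ∈ Icc 1 t, α i • w i ω := by
    intro ω t ht
    obtain ⟨h1, h2⟩ := mem_Icc.1 ht
    have hpos : 0 < ∑ i ∈ Icc 1 t, α i := hα1.trans_le <| single_le_sum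
      (fun i hi => hα' i (Icc_subset_Icc_right h2 hi)) (left_mem_Icc.2 h1)
    rw [hx t h1 h2, smul_inv_smul₀ hpos.ne']
  have hpointwise : ∀ᵐ ω ∂P, (∑ t ∈ Icc 1 T, α t) * (f (x T ω) - f xstar)
      ≤ ∑ t ∈ Icc 1 T, α t * ⟪(P[g t|ℱ t]) ω, w t ω - xstar⟫ := by
    have hG : ∀ᵐ ω ∂P, ∀ t ∈ Icc 1 T, IsSubgradient f (x t ω) ((P[g t|ℱ t]) ω) :=
      (Filter.eventually_all_finset _).2 fun t ht => hsubgrad t (mem_Icc.1 ht).1 (mem_Icc.1 ht).2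
    filter_upwards [hG] with ω hGω
    exact sum_mul_sub_le_sum_mul_inner_of_isSubgradient hα' (hxsum ω) hGω
  have hmeas : ∀ t ∈ Icc 1 T, StronglyMeasurable[ℱ t] (fun ω => w t ω - xstar) := fun t ht =>
    (hwmeas t t (mem_Icc.1 ht).1 le_rfl (mem_Icc.1 ht).2).sub stronglyMeasurable_const
  have hgint' : ∀ t ∈ Icc 1 T, Integrable (g t) P := fun t ht =>
    hgint t (mem_Icc.1 ht).1 (mem_Icc.1 ht).2
  have hint : ∀ t ∈ Icc 1 T, Integrable (fun ω => ⟪g t ω, w t ω - xstar⟫) P := fun t ht => by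
    simp only [inner_sub_right]
    exact (hinner_w t (mem_Icc.1 ht).1 (mem_Icc.1 ht).2).sub ((hgint' t ht).inner_const xstar)
  calc ∫ ω, (∑ t ∈ Icc 1 T, α t) * (f (x T ω) - f xstar) ∂P
      ≤ ∫ ω, ∑ t ∈ Icc 1 T, α t * ⟪(P[g t|ℱ t]) ω, w t ω - xstar⟫ ∂P :=
        integral_mono_ae (((hfint T hT le_rfl).sub (integrable_const _)).const_mul _)
          (integrable_sum_mul_inner_condExp hmeas hgint' hint) hpointwise
    _ = ∫ ω, ∑ t ∈ Icc 1 T, α t * ⟪g t ω, w t ω - xstar⟫ ∂P :=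
        integral_sum_mul_inner_condExp hℱle hmeas hgint' hint

/-- Theorem 1, in-expectation version: if almost surely the conditional
expectation `G_t = E[g_t | ℱ_t]` is a subgradient of `ℒ` at `x_t`, then
`E[α_{1:T}(ℒ(x_T) − ℒ(x⋆))] ≤ E[Σ_{t=1}^T α_t ⟨g_t, w_t − x⋆⟩]`. -/
theorem anytime_online_to_batch_in_expectation
    {E : Type*} [NormedAddCommGroup E] [InnerProductSpace ℝ E] [CompleteSpace E]
    [SecondCountableTopology E] [MeasurableSpace E] [BorelSpace E]
    {Ω : Type*} [m0 : MeasurableSpace Ω] (P : Measure Ω) [IsProbabilityMeasure P]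
    (ℱ : ℕ → MeasurableSpace Ω) (hℱmono : Monotone ℱ) (hℱle : ∀ t, ℱ t ≤ m0)
    (D : Set E) (hD : Convex ℝ D)
    (T : ℕ) (hT : 1 ≤ T)
    (α : ℕ → ℝ) (hα : ∀ t, 1 ≤ t → t ≤ T → 0 ≤ α t) (hα1 : 0 < α 1)
    (w g : ℕ → Ω → E)
    (hwD : ∀ t, 1 ≤ t → t ≤ T → ∀ ω, w t ω ∈ D)
    (hwmeas : ∀ s t, 1 ≤ s → s ≤ t → t ≤ T → StronglyMeasurable[ℱ t] (w s))
    (hgmeas : ∀ s t, 1 ≤ s → s < t → t ≤ T → StronglyMeasurable[ℱ t] (g s))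
    (hgint : ∀ t, 1 ≤ t → t ≤ T → Integrable (g t) P)
    (x : ℕ → Ω → E)
    (hx : ∀ t, 1 ≤ t → t ≤ T → ∀ ω,
      x t ω = (∑ i ∈ Finset.Icc 1 t, α i)⁻¹ • ∑ i ∈ Finset.Icc 1 t, α i • w i ω)
    (f : E → ℝ) (hconv : ConvexOn ℝ Set.univ f)
    (hsubgrad : ∀ t, 1 ≤ t → t ≤ T → ∀ᵐ ω ∂P, ∀ y : E,
      f y ≥ f (x t ω) + ⟪(P[g t | ℱ t]) ω, y - x t ω⟫)
    (hfint : ∀ t, 1 ≤ t → t ≤ T → Integrable (fun ω => f (x t ω)) P)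
    (hinner_w : ∀ t, 1 ≤ t → t ≤ T → Integrable (fun ω => ⟪g t ω, w t ω⟫) P)
    (hinner_x : ∀ s t, 1 ≤ s → s ≤ T → 1 ≤ t → t ≤ T →
      Integrable (fun ω => ⟪g t ω, x s ω⟫) P)
    (xstar : E) (hxstar : xstar ∈ D) :
    ∫ ω, (∑ t ∈ Finset.Icc 1 T, α t) * (f (x T ω) - f xstar) ∂P
      ≤ ∫ ω, ∑ t ∈ Finset.Icc 1 T, α t * ⟪g t ω, w t ω - xstar⟫ ∂P :=
  anytime_online_to_batch_in_expectation_general (m0 := m0) P ℱ hℱle T hT α hα hα1 w g hwmeas hgint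
    x hx f hsubgrad hfint hinner_w xstar
end

section
/- (Corollary 3, deterministic version.) Suppose ℒ : E → ℝ is convex, g_t ∈ ∂ℒ(x_t) for each 1 ≤ t ≤ T, and x⋆ ∈ D. If R^M ≥ 0 is a number such that Σ_{i=1}^t α_i ⟨g_i, w_i − x⋆⟩ ≤ R^M for every 1 ≤ t ≤ T, then Σ_{t=1}^T α_t (ℒ(x_t) − ℒ(x⋆)) ≤ R^M (1 + log(α_{1:T}/α_1)). -/
/-!
Write `A t = α₁ + ⋯ + α_t`, so that `A t • x t = ∑_{i ≤ t} α i • w i`. Since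
`A (t+1) • x (t+1) = A t • x t + α (t+1) • w (t+1)`, the subgradient inequality at `x (t+1)`,
tested against `x t` with weight `A t` and against `x⋆` with weight `α (t+1)`, shows that
`A t (f (x t) - f x⋆)` grows by at most `α (t+1) ⟪g (t+1), w (t+1) - x⋆⟫`. Hence
`A t (f (x t) - f x⋆)` is bounded by the partial linearized regret, so by `R^M`, and the weighted
suboptimality is at most `R^M ∑ α t / A t`. Finally, for `t ≥ 2`,
`α t / A t = 1 - A (t-1) / A t ≤ log (A t / A (t-1))`, and the sum telescopes to `1 + log (A T / α 1)`.
-/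

open scoped RealInnerProductSpace
open Finset Real

lemma div_add_le_log_add_sub_log {S a : ℝ} (hS : 0 < S) (ha : 0 ≤ a) :
    a / (S + a) ≤ log (S + a) - log S := by
  have hSa : 0 < S + a := by linarith
  have hlog := one_sub_inv_le_log_of_pos (div_pos hSa hS)
  rw [log_div hSa.ne' hS.ne', inv_div] at hlog
  calc a / (S + a) = 1 - S / (S + a) := by field_simp; ring
    _ ≤ log (S + a) - log S := hlog

lemma sum_Icc_one_pos {α : ℕ → ℝ} {T t : ℕ} (hα : ∀ t, 1 ≤ t → t ≤ T → 0 ≤ α t)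
    (hα1 : 0 < α 1) (ht : 1 ≤ t) (htT : t ≤ T) : 0 < ∑ i ∈ Icc 1 t, α i :=
  hα1.trans_le <| single_le_sum (fun i hi => hα i (mem_Icc.1 hi).1 ((mem_Icc.1 hi).2.trans htT))
    (mem_Icc.2 ⟨le_rfl, ht⟩)

lemma sum_div_partial_sum_le_one_add_log {α : ℕ → ℝ} {T : ℕ}
    (hα : ∀ t, 1 ≤ t → t ≤ T → 0 ≤ α t) (hα1 : 0 < α 1) {t : ℕ} (ht : 1 ≤ t) (htT : t ≤ T) :
    ∑ i ∈ Icc 1 t, α i / ∑ j ∈ Icc 1 i, α j ≤ 1 + log ((∑ i ∈ Icc 1 t, α i) / α 1) := by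
  induction t, ht using Nat.le_induction with
  | base => simp [div_self hα1.ne']
  | succ t ht ih =>
    have hA := sum_Icc_one_pos hα hα1 ht (by omega)
    have hαt := hα (t + 1) (by omega) htT
    have ih' := ih (by omega)
    rw [log_div hA.ne' hα1.ne'] at ih'
    rw [sum_Icc_succ_top (by omega), sum_Icc_succ_top (by omega),
      log_div (add_pos_of_pos_of_nonneg hA hαt).ne' hα1.ne']
    linarith [div_add_le_log_add_sub_log hA hαt]

section OnlineToBatch

variable {E : Type*} [NormedAddCommGroup E] [InnerProductSpace ℝ E]

lemma online_to_batch_step {f : E → ℝ} {g y y' w : E} {S a : ℝ} (hS : 0 ≤ S) (ha : 0 ≤ a)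
    (hy' : (S + a) • y' = S • y + a • w) (hg : ∀ z, f z ≥ f y' + ⟪g, z - y'⟫) (u : E) :
    (S + a) * (f y' - f u) ≤ S * (f y - f u) + a * ⟪g, w - u⟫ := by
  have hsub (z : E) : f y' - f z ≤ ⟪g, y' - z⟫ := by
    have := hg z
    rw [inner_sub_right] at this ⊢
    linarith
  have hy : S * (f y' - f y) ≤ S * ⟪g, y' - y⟫ := mul_le_mul_of_nonneg_left (hsub y) hS
  have hu : a * (f y' - f u) ≤ a * ⟪g, y' - u⟫ := mul_le_mul_of_nonneg_left (hsub u) ha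
  have hinner : S * ⟪g, y' - y⟫ + a * ⟪g, y' - u⟫ = a * ⟪g, w - u⟫ := by
    have := congrArg (⟪g, ·⟫) hy'
    simp only [inner_add_right, real_inner_smul_right] at this
    simp only [inner_sub_right]
    linarith
  linarith

lemma partial_sum_mul_sub_le_linearized_regret {α : ℕ → ℝ} {T : ℕ}
    (hα : ∀ t, 1 ≤ t → t ≤ T → 0 ≤ α t) {w x g : ℕ → E} {f : E → ℝ}
    (hx : ∀ t, 1 ≤ t → t ≤ T → (∑ i ∈ Icc 1 t, α i) • x t = ∑ i ∈ Icc 1 t, α i • w i)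
    (hg : ∀ t, 1 ≤ t → t ≤ T → ∀ y : E, f y ≥ f (x t) + ⟪g t, y - x t⟫) (u : E) :
    ∀ t ≤ T, (∑ i ∈ Icc 1 t, α i) * (f (x t) - f u) ≤ ∑ i ∈ Icc 1 t, α i * ⟪g i, w i - u⟫ := by
  intro t htT
  induction t with
  | zero => simp
  | succ t ih =>
    have hA : 0 ≤ ∑ i ∈ Icc 1 t, α i :=
      sum_nonneg fun i hi => hα i (mem_Icc.1 hi).1 (by grind)
    have hxt : (∑ i ∈ Icc 1 t, α i) • x t = ∑ i ∈ Icc 1 t, α i • w i := by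
      rcases Nat.eq_zero_or_pos t with rfl | ht
      · simp
      · exact hx t ht (by omega)
    have hx' := hx (t + 1) (by omega) htT
    rw [sum_Icc_succ_top (by omega), sum_Icc_succ_top (by omega), ← hxt] at hx'
    rw [sum_Icc_succ_top (by omega), sum_Icc_succ_top (by omega)]
    have step :=
      online_to_batch_step hA (hα (t + 1) (by omega) htT) hx' (hg (t + 1) (by omega) htT) u
    linarith [ih (by omega)]

end OnlineToBatch

theorem anytime_regret_bound_deterministic_general
    {E : Type*} [NormedAddCommGroup E] [InnerProductSpace ℝ E]
    (T : ℕ) (hT : 1 ≤ T)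
    (α : ℕ → ℝ) (hα : ∀ t, 1 ≤ t → t ≤ T → 0 ≤ α t) (hα1 : 0 < α 1)
    (w : ℕ → E)
    (x : ℕ → E)
    (hx : ∀ t, 1 ≤ t → t ≤ T →
      x t = (∑ i ∈ Finset.Icc 1 t, α i)⁻¹ • ∑ i ∈ Finset.Icc 1 t, α i • w i)
    (f : E → ℝ)
    (g : ℕ → E)
    (hg : ∀ t, 1 ≤ t → t ≤ T → ∀ y : E, f y ≥ f (x t) + ⟪g t, y - x t⟫)
    (xstar : E)
    (RM : ℝ) (hRM : 0 ≤ RM)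
    (hreg : ∀ t, 1 ≤ t → t ≤ T →
      ∑ i ∈ Finset.Icc 1 t, α i * ⟪g i, w i - xstar⟫ ≤ RM) :
    ∑ t ∈ Finset.Icc 1 T, α t * (f (x t) - f xstar)
      ≤ RM * (1 + Real.log ((∑ i ∈ Finset.Icc 1 T, α i) / α 1)) := by
  have hA (t) (ht : 1 ≤ t) (htT : t ≤ T) := sum_Icc_one_pos hα hα1 ht htT
  have hsum (t) (ht : 1 ≤ t) (htT : t ≤ T) :
      (∑ i ∈ Icc 1 t, α i) • x t = ∑ i ∈ Icc 1 t, α i • w i := by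
    rw [hx t ht htT, smul_inv_smul₀ (hA t ht htT).ne']
  have hsubopt (t) (ht : 1 ≤ t) (htT : t ≤ T) :
      α t * (f (x t) - f xstar) ≤ RM * (α t / ∑ i ∈ Icc 1 t, α i) := by
    have hbound : f (x t) - f xstar ≤ RM / ∑ i ∈ Icc 1 t, α i := by
      rw [le_div_iff₀' (hA t ht htT)]
      exact (partial_sum_mul_sub_le_linearized_regret hα hsum hg xstar t htT).trans
        (hreg t ht htT)
    calc α t * (f (x t) - f xstar) ≤ α t * (RM / ∑ i ∈ Icc 1 t, α i) :=
          mul_le_mul_of_nonneg_left hbound (hα t ht htT)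
      _ = RM * (α t / ∑ i ∈ Icc 1 t, α i) := by ring
  calc ∑ t ∈ Icc 1 T, α t * (f (x t) - f xstar)
      ≤ ∑ t ∈ Icc 1 T, RM * (α t / ∑ i ∈ Icc 1 t, α i) :=
        sum_le_sum fun t ht => hsubopt t (mem_Icc.1 ht).1 (mem_Icc.1 ht).2
    _ = RM * ∑ t ∈ Icc 1 T, α t / ∑ i ∈ Icc 1 t, α i := (mul_sum ..).symm
    _ ≤ RM * (1 + log ((∑ i ∈ Icc 1 T, α i) / α 1)) :=
        mul_le_mul_of_nonneg_left (sum_div_partial_sum_le_one_add_log hα hα1 hT le_rfl) hRM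

/-- Corollary 3, deterministic version: if the partial weighted linearized
regrets are all bounded by `R^M ≥ 0`, then
`Σ_{t=1}^T α_t (ℒ(x_t) − ℒ(x⋆)) ≤ R^M (1 + log(α_{1:T}/α_1))`. -/
theorem anytime_regret_bound_deterministic
    {E : Type*} [NormedAddCommGroup E] [InnerProductSpace ℝ E]
    (D : Set E) (hD : Convex ℝ D)
    (T : ℕ) (hT : 1 ≤ T)
    (α : ℕ → ℝ) (hα : ∀ t, 1 ≤ t → t ≤ T → 0 ≤ α t) (hα1 : 0 < α 1)
    (w : ℕ → E) (hw : ∀ t, 1 ≤ t → t ≤ T → w t ∈ D)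
    (x : ℕ → E)
    (hx : ∀ t, 1 ≤ t → t ≤ T →
      x t = (∑ i ∈ Finset.Icc 1 t, α i)⁻¹ • ∑ i ∈ Finset.Icc 1 t, α i • w i)
    (f : E → ℝ) (hconv : ConvexOn ℝ Set.univ f)
    (g : ℕ → E)
    (hg : ∀ t, 1 ≤ t → t ≤ T → ∀ y : E, f y ≥ f (x t) + ⟪g t, y - x t⟫)
    (xstar : E) (hxstar : xstar ∈ D)
    (RM : ℝ) (hRM : 0 ≤ RM)
    (hreg : ∀ t, 1 ≤ t → t ≤ T →
      ∑ i ∈ Finset.Icc 1 t, α i * ⟪g i, w i - xstar⟫ ≤ RM) :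
    ∑ t ∈ Finset.Icc 1 T, α t * (f (x t) - f xstar)
      ≤ RM * (1 + Real.log ((∑ i ∈ Finset.Icc 1 T, α i) / α 1)) :=
  anytime_regret_bound_deterministic_general T hT α hα hα1 w x hx f g hg xstar RM hRM hreg
end

section
/- (Corollary 4, deterministic version with explicit constant.) Take α_t = 1 for all t, so x_t = (1/t) Σ_{i=1}^t w_i. Suppose ℒ : E → ℝ is convex, g_t ∈ ∂ℒ(x_t) for each 1 ≤ t ≤ T, x⋆ ∈ D, and R_1 ≤ R_2 ≤ … ≤ R_T is a nondecreasing sequence with R_T ≥ 0 such that Σ_{i=1}^t ⟨g_i, w_i − x⋆⟩ ≤ R_t for every 1 ≤ t ≤ T. Then for every integer k ≥ 1, with s_t = t^k: (Σ_{t=1}^T s_t (ℒ(x_t) − ℒ(x⋆))) / (Σ_{t=1}^T s_t) ≤ (k+1) · R_T / T. -/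
/-!
Cutkosky's anytime online-to-batch argument. Since `w (t+1) = (t+1) • x (t+1) - t • x t`, the
subgradient inequality at `x (t+1)`, tested at `x t` and at `x⋆`, bounds the increment of
`t * (ℒ (x t) - ℒ x⋆)` by `⟪g (t+1), w (t+1) - x⋆⟫`; telescoping gives
`t * (ℒ (x t) - ℒ x⋆) ≤ R t ≤ R T`. Weighting these `O(1/t)` gaps by `t ^ k` costs at most
`T ^ k * R T` against a total weight `∑ t ^ k ≥ T ^ (k+1) / (k+1)`.
-/

open Finset
open scoped RealInnerProductSpace

theorem pow_succ_le_mul_sum_Icc_pow (n k : ℕ) :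
    (n : ℝ) ^ (k + 1) ≤ (k + 1) * ∑ t ∈ Icc 1 n, (t : ℝ) ^ k := by
  induction n with
  | zero => simp
  | succ n ih =>
    have hstep : ((n : ℝ) + 1) ^ (k + 1) - n ^ (k + 1) ≤ (k + 1) * ((n : ℝ) + 1) ^ k := by
      have h := abs_pow_sub_pow_le ((n : ℝ) + 1) n (k + 1)
      rw [abs_of_pos (a := (n : ℝ) + 1) (by positivity),
        abs_of_nonneg (a := (n : ℝ)) (by positivity), max_eq_left (by linarith)] at h
      simpa using (le_abs_self _).trans h
    rw [sum_Icc_succ_top (by omega : 1 ≤ n + 1)]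
    push_cast
    linarith

theorem sum_pow_mul_div_sum_pow_le {a : ℕ → ℝ} {C : ℝ} {T k : ℕ} (hT : 1 ≤ T) (hk : 1 ≤ k)
    (hC : 0 ≤ C) (ha : ∀ t ∈ Icc 1 T, t * a t ≤ C) :
    (∑ t ∈ Icc 1 T, (t : ℝ) ^ k * a t) / ∑ t ∈ Icc 1 T, (t : ℝ) ^ k ≤ (k + 1) * C / T := by
  have hTpos : (0 : ℝ) < T := by exact_mod_cast hT
  have hnum : ∑ t ∈ Icc 1 T, (t : ℝ) ^ k * a t ≤ (T : ℝ) ^ k * C := by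
    calc ∑ t ∈ Icc 1 T, (t : ℝ) ^ k * a t
        ≤ ∑ t ∈ Icc 1 T, (T : ℝ) ^ (k - 1) * C := sum_le_sum fun t ht => ?_
      _ = (T : ℝ) ^ k * C := by
        rw [sum_const, Nat.card_Icc, Nat.add_sub_cancel, nsmul_eq_mul, ← mul_assoc, ← pow_succ',
          Nat.sub_add_cancel hk]
    have htT : (t : ℝ) ≤ T := by exact_mod_cast (mem_Icc.mp ht).2
    calc (t : ℝ) ^ k * a t = (t : ℝ) ^ (k - 1) * (t * a t) := by
          rw [← mul_assoc, ← pow_succ, Nat.sub_add_cancel hk]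
      _ ≤ (t : ℝ) ^ (k - 1) * C := by gcongr; exact ha t ht
      _ ≤ (T : ℝ) ^ (k - 1) * C := by gcongr
  have hden := pow_succ_le_mul_sum_Icc_pow T k
  have hS : 0 < ∑ t ∈ Icc 1 T, (t : ℝ) ^ k :=
    pos_of_mul_pos_right ((pow_pos hTpos _).trans_le hden) (by positivity)
  rw [div_le_div_iff₀ hS hTpos]
  calc (∑ t ∈ Icc 1 T, (t : ℝ) ^ k * a t) * T
      ≤ (T : ℝ) ^ k * C * T := by gcongr
    _ = C * (T : ℝ) ^ (k + 1) := by ring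
    _ ≤ C * ((k + 1) * ∑ t ∈ Icc 1 T, (t : ℝ) ^ k) := by gcongr
    _ = (k + 1) * C * ∑ t ∈ Icc 1 T, (t : ℝ) ^ k := by ring

section InnerProductSpace

variable {E : Type*} [NormedAddCommGroup E] [InnerProductSpace ℝ E]

theorem add_one_mul_sub_mul_sub_le_inner {f : E → ℝ} {g y : E} (z u : E) {s : ℝ}
    (hg : ∀ v, f v ≥ f y + ⟪g, v - y⟫) (hs : 0 ≤ s) :
    (s + 1) * f y - s * f z - f u ≤ ⟪g, (s + 1) • y - s • z - u⟫ := by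
  have hz := hg z
  have hu := hg u
  have hvec : (s + 1) • y - s • z - u = s • (y - z) + (y - u) := by module
  rw [hvec, inner_add_right, real_inner_smul_right]
  rw [← neg_sub y z, inner_neg_right] at hz
  rw [← neg_sub y u, inner_neg_right] at hu
  nlinarith [mul_le_mul_of_nonneg_left hz hs]

theorem anytime_online_to_batch {w x g : ℕ → E} {f : E → ℝ} {n : ℕ}
    (hx : ∀ t, 1 ≤ t → t ≤ n → x t = (t : ℝ)⁻¹ • ∑ i ∈ Icc 1 t, w i)
    (hg : ∀ t, 1 ≤ t → t ≤ n → ∀ y, f y ≥ f (x t) + ⟪g t, y - x t⟫) (u : E) :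
    ∀ t ≤ n, (t : ℝ) * (f (x t) - f u) ≤ ∑ i ∈ Icc 1 t, ⟪g i, w i - u⟫ := by
  have hsum : ∀ t ≤ n, (t : ℝ) • x t = ∑ i ∈ Icc 1 t, w i := by
    rintro (_ | t) ht
    · simp
    · rw [hx _ (by omega) ht, smul_inv_smul₀ (by positivity)]
  intro t ht
  induction t with
  | zero => simp
  | succ t ih =>
    have hw : w (t + 1) = ((t : ℝ) + 1) • x (t + 1) - (t : ℝ) • x t := by
      rw [hsum t (by omega), ← Nat.cast_succ, hsum (t + 1) ht, sum_Icc_succ_top (by omega)]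
      abel
    have hstep := add_one_mul_sub_mul_sub_le_inner (x t) u (hg (t + 1) (by omega) ht)
      (Nat.cast_nonneg t)
    rw [sum_Icc_succ_top (by omega), hw]
    push_cast
    linarith [ih (by omega)]

end InnerProductSpace

theorem anytime_simultaneous_weighted_regret_general
    {E : Type*} [NormedAddCommGroup E] [InnerProductSpace ℝ E]
    (T : ℕ) (hT : 1 ≤ T)
    (w : ℕ → E)
    (x : ℕ → E)
    (hx : ∀ t, 1 ≤ t → t ≤ T → x t = (t : ℝ)⁻¹ • ∑ i ∈ Finset.Icc 1 t, w i)
    (f : E → ℝ)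
    (g : ℕ → E)
    (hg : ∀ t, 1 ≤ t → t ≤ T → ∀ y : E, f y ≥ f (x t) + ⟪g t, y - x t⟫)
    (xstar : E)
    (R : ℕ → ℝ)
    (hRmono : ∀ s t, 1 ≤ s → s ≤ t → t ≤ T → R s ≤ R t) (hRT : 0 ≤ R T)
    (hreg : ∀ t, 1 ≤ t → t ≤ T →
      ∑ i ∈ Finset.Icc 1 t, ⟪g i, w i - xstar⟫ ≤ R t) :
    ∀ k : ℕ, 1 ≤ k →
      (∑ t ∈ Finset.Icc 1 T, (t : ℝ) ^ k * (f (x t) - f xstar))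
          / (∑ t ∈ Finset.Icc 1 T, (t : ℝ) ^ k)
        ≤ (k + 1) * R T / T := by
  intro k hk
  refine sum_pow_mul_div_sum_pow_le hT hk hRT fun t ht => ?_
  obtain ⟨ht1, htT⟩ := mem_Icc.mp ht
  calc (t : ℝ) * (f (x t) - f xstar)
      ≤ ∑ i ∈ Icc 1 t, ⟪g i, w i - xstar⟫ := anytime_online_to_batch hx hg xstar t htT
    _ ≤ R t := hreg t ht1 htT
    _ ≤ R T := hRmono t T ht1 htT le_rfl

/-- Corollary 4, deterministic version with explicit constant: with unit
weights, for every `k ≥ 1` and `s_t = t^k`,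
`(Σ_{t=1}^T s_t (ℒ(x_t) − ℒ(x⋆))) / (Σ_{t=1}^T s_t) ≤ (k+1)·R_T/T`. -/
theorem anytime_simultaneous_weighted_regret
    {E : Type*} [NormedAddCommGroup E] [InnerProductSpace ℝ E]
    (D : Set E) (hD : Convex ℝ D)
    (T : ℕ) (hT : 1 ≤ T)
    (w : ℕ → E) (hw : ∀ t, 1 ≤ t → t ≤ T → w t ∈ D)
    (x : ℕ → E)
    (hx : ∀ t, 1 ≤ t → t ≤ T → x t = (t : ℝ)⁻¹ • ∑ i ∈ Finset.Icc 1 t, w i)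
    (f : E → ℝ) (hconv : ConvexOn ℝ Set.univ f)
    (g : ℕ → E)
    (hg : ∀ t, 1 ≤ t → t ≤ T → ∀ y : E, f y ≥ f (x t) + ⟪g t, y - x t⟫)
    (xstar : E) (hxstar : xstar ∈ D)
    (R : ℕ → ℝ)
    (hRmono : ∀ s t, 1 ≤ s → s ≤ t → t ≤ T → R s ≤ R t) (hRT : 0 ≤ R T)
    (hreg : ∀ t, 1 ≤ t → t ≤ T →
      ∑ i ∈ Finset.Icc 1 t, ⟪g i, w i - xstar⟫ ≤ R t) :
    ∀ k : ℕ, 1 ≤ k →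
      (∑ t ∈ Finset.Icc 1 T, (t : ℝ) ^ k * (f (x t) - f xstar))
          / (∑ t ∈ Finset.Icc 1 T, (t : ℝ) ^ k)
        ≤ (k + 1) * R T / T :=
  anytime_simultaneous_weighted_regret_general T hT w x hx f g hg xstar R hRmono hRT hreg
end

section
/- (Theorem 5, deterministic version: general anytime online-to-batch.) Suppose ℒ : E → ℝ and, for each 1 ≤ t ≤ T, ℓ_t : D → ℝ is a convex function satisfying ℒ(x_t) − ℒ(x) ≤ ℓ_t(x_t) − ℓ_t(x) for all x ∈ D. Then for every x⋆ ∈ D: α_{1:T} (ℒ(x_T) − ℒ(x⋆)) ≤ Σ_{t=1}^T α_t (ℓ_t(w_t) − ℓ_t(x⋆)). -/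
/-! The weighted gap `α_{1:t} (ℒ(x_t) − ℒ(x⋆))` grows by at most `α_t (ℓ_t(w_t) − ℓ_t(x⋆))`
from `t - 1` to `t`: the increment is `α_{1:t-1} (ℒ(x_t) − ℒ(x_{t-1})) + α_t (ℒ(x_t) − ℒ(x⋆))`,
both differences are dominated by the corresponding differences of `ℓ_t`, and convexity of `ℓ_t`
at `x_t`, the convex combination of `x_{t-1}` and `w_t` with weights `α_{1:t-1}` and `α_t`,
bounds what remains by `α_t ℓ_t(w_t)`. Summing the increments gives the theorem. -/

open Finset

section

variable {𝕜 E : Type*} [Field 𝕜] [LinearOrder 𝕜] [IsStrictOrderedRing 𝕜]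

theorem ConvexOn.mul_map_centerMass_insert_le {ι : Type*} [DecidableEq ι] [AddCommGroup E]
    [Module 𝕜 E] {D : Set E} {φ : E → 𝕜}
    (hφ : ConvexOn 𝕜 D φ) {s : Finset ι} {i : ι} (hi : i ∉ s) {w : ι → 𝕜} {z : ι → E}
    (hw : ∀ j ∈ insert i s, 0 ≤ w j) (hs : 0 < ∑ j ∈ s, w j) (hz : ∀ j ∈ insert i s, z j ∈ D) :
    (∑ j ∈ insert i s, w j) * φ ((insert i s).centerMass w z)
      ≤ (∑ j ∈ s, w j) * φ (s.centerMass w z) + w i * φ (z i) := by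
  have hwi : 0 ≤ w i := hw i (mem_insert_self i s)
  have hsum : 0 < w i + ∑ j ∈ s, w j := by positivity
  have hmem : s.centerMass w z ∈ D :=
    hφ.1.centerMass_mem (fun j hj ↦ hw j (mem_insert_of_mem hj)) hs
      (fun j hj ↦ hz j (mem_insert_of_mem hj))
  have key := hφ.2 (hz i (mem_insert_self i s)) hmem
    (div_nonneg hwi hsum.le : 0 ≤ w i / (w i + ∑ j ∈ s, w j)) (div_nonneg hs.le hsum.le)
    (by field_simp)
  rw [smul_eq_mul, smul_eq_mul] at key
  rw [centerMass_insert _ _ _ hi hs.ne', sum_insert hi]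
  calc (w i + ∑ j ∈ s, w j) * φ _
      ≤ (w i + ∑ j ∈ s, w j) * (w i / (w i + ∑ j ∈ s, w j) * φ (z i)
          + (∑ j ∈ s, w j) / (w i + ∑ j ∈ s, w j) * φ (s.centerMass w z)) :=
        mul_le_mul_of_nonneg_left key hsum.le
    _ = (∑ j ∈ s, w j) * φ (s.centerMass w z) + w i * φ (z i) := by field_simp; ring

theorem mul_sub_le_of_dominated {f ℓ : E → 𝕜} {s a : 𝕜} {y z w u : E} (hs : 0 ≤ s) (ha : 0 ≤ a)
    (hconv : (s + a) * ℓ z ≤ s * ℓ y + a * ℓ w)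
    (hy : f z - f y ≤ ℓ z - ℓ y) (hu : f z - f u ≤ ℓ z - ℓ u) :
    (s + a) * (f z - f u) ≤ s * (f y - f u) + a * (ℓ w - ℓ u) := by
  linarith [mul_le_mul_of_nonneg_left hy hs, mul_le_mul_of_nonneg_left hu ha]

end

theorem general_anytime_online_to_batch_deterministic_general
    {E : Type*} [NormedAddCommGroup E] [InnerProductSpace ℝ E]
    (D : Set E) (hD : Convex ℝ D)
    (T : ℕ)
    (α : ℕ → ℝ) (hα : ∀ t, 1 ≤ t → t ≤ T → 0 ≤ α t) (hα1 : 0 < α 1)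
    (w : ℕ → E) (hw : ∀ t, 1 ≤ t → t ≤ T → w t ∈ D)
    (x : ℕ → E)
    (hx : ∀ t, 1 ≤ t → t ≤ T →
      x t = (∑ i ∈ Finset.Icc 1 t, α i)⁻¹ • ∑ i ∈ Finset.Icc 1 t, α i • w i)
    (f : E → ℝ)
    (ℓ : ℕ → E → ℝ)
    (hℓconv : ∀ t, 1 ≤ t → t ≤ T → ConvexOn ℝ D (ℓ t))
    (hdom : ∀ t, 1 ≤ t → t ≤ T → ∀ y ∈ D, f (x t) - f y ≤ ℓ t (x t) - ℓ t y)
    (xstar : E) (hxstar : xstar ∈ D) :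
    (∑ t ∈ Finset.Icc 1 T, α t) * (f (x T) - f xstar)
      ≤ ∑ t ∈ Finset.Icc 1 T, α t * (ℓ t (w t) - ℓ t xstar) := by
  rcases T.eq_zero_or_pos with rfl | hT
  · simp
  replace hx : ∀ t, 1 ≤ t → t ≤ T → x t = (Icc 1 t).centerMass α w := hx
  have hαI : ∀ t ≤ T, ∀ i ∈ Icc 1 t, 0 ≤ α i := fun t ht i hi ↦
    hα i (mem_Icc.1 hi).1 ((mem_Icc.1 hi).2.trans ht)
  have hS : ∀ t, 1 ≤ t → t ≤ T → 0 < ∑ i ∈ Icc 1 t, α i := fun t h1 ht ↦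
    sum_pos' (hαI t ht) ⟨1, mem_Icc.2 ⟨le_rfl, h1⟩, hα1⟩
  have hwI : ∀ t ≤ T, ∀ i ∈ Icc 1 t, w i ∈ D := fun t ht i hi ↦
    hw i (mem_Icc.1 hi).1 ((mem_Icc.1 hi).2.trans ht)
  suffices ∀ t, 1 ≤ t → t ≤ T → (∑ i ∈ Icc 1 t, α i) * (f (x t) - f xstar)
      ≤ ∑ i ∈ Icc 1 t, α i * (ℓ i (w i) - ℓ i xstar) from this T hT le_rfl
  intro t ht
  induction t, ht using Nat.le_induction with
  | base =>
    intro h1T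
    have hx1 : x 1 = w 1 := (hx 1 le_rfl h1T).trans (centerMass_singleton _ _ hα1.ne')
    simpa [hx1] using mul_le_mul_of_nonneg_left (hdom 1 le_rfl h1T xstar hxstar) hα1.le
  | succ t ht ih =>
    intro htT
    have htT' : t ≤ T := by omega
    have hIcc : insert (t + 1) (Icc 1 t) = Icc 1 (t + 1) :=
      insert_Icc_right_eq_Icc_add_one (by omega)
    have hxt := hx t ht htT'
    have hxtD : x t ∈ D := hxt ▸ hD.centerMass_mem (hαI t htT') (hS t ht htT') (hwI t htT')
    have hconv := (hℓconv (t + 1) (by omega) htT).mul_map_centerMass_insert_le (by simp)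
      (hIcc ▸ hαI _ htT) (hS t ht htT') (hIcc ▸ hwI _ htT)
    rw [hIcc, ← hx (t + 1) (by omega) htT, ← hxt, sum_Icc_succ_top (by omega)] at hconv
    have hstep := mul_sub_le_of_dominated (hS t ht htT').le (hα _ (by omega) htT) hconv
      (hdom (t + 1) (by omega) htT (x t) hxtD) (hdom (t + 1) (by omega) htT xstar hxstar)
    rw [sum_Icc_succ_top (by omega), sum_Icc_succ_top (by omega)]
    linarith [ih htT']

/-- Theorem 5, deterministic version: general anytime online-to-batch:
if each convex `ℓ_t` satisfies `ℒ(x_t) − ℒ(x) ≤ ℓ_t(x_t) − ℓ_t(x)` on `D`, then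
`α_{1:T} (ℒ(x_T) − ℒ(x⋆)) ≤ Σ_{t=1}^T α_t (ℓ_t(w_t) − ℓ_t(x⋆))`. -/
theorem general_anytime_online_to_batch_deterministic
    {E : Type*} [NormedAddCommGroup E] [InnerProductSpace ℝ E]
    (D : Set E) (hD : Convex ℝ D)
    (T : ℕ) (hT : 1 ≤ T)
    (α : ℕ → ℝ) (hα : ∀ t, 1 ≤ t → t ≤ T → 0 ≤ α t) (hα1 : 0 < α 1)
    (w : ℕ → E) (hw : ∀ t, 1 ≤ t → t ≤ T → w t ∈ D)
    (x : ℕ → E)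
    (hx : ∀ t, 1 ≤ t → t ≤ T →
      x t = (∑ i ∈ Finset.Icc 1 t, α i)⁻¹ • ∑ i ∈ Finset.Icc 1 t, α i • w i)
    (f : E → ℝ)
    (ℓ : ℕ → E → ℝ)
    (hℓconv : ∀ t, 1 ≤ t → t ≤ T → ConvexOn ℝ D (ℓ t))
    (hdom : ∀ t, 1 ≤ t → t ≤ T → ∀ y ∈ D, f (x t) - f y ≤ ℓ t (x t) - ℓ t y)
    (xstar : E) (hxstar : xstar ∈ D) :
    (∑ t ∈ Finset.Icc 1 T, α t) * (f (x T) - f xstar)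
      ≤ ∑ t ∈ Finset.Icc 1 T, α t * (ℓ t (w t) - ℓ t xstar) :=
  general_anytime_online_to_batch_deterministic_general D hD T α hα hα1 w hw x hx f ℓ hℓconv hdom
    xstar hxstar
end

section
/- (Corollary 6, deterministic version: strongly convex losses with Follow-the-Leader.) Let D be a compact convex subset of a real Hilbert space E with diameter at most B, and let ℒ : E → ℝ be differentiable and μ-strongly convex (μ > 0) with ‖∇ℒ(x)‖ ≤ G for all x ∈ D. Take α_t = 1 for all t, let w_1 ∈ D be arbitrary, let x_t = (1/t) Σ_{i=1}^t w_i, define ℓ_t(x) = ⟨∇ℒ(x_t), x⟩ + (μ/2)‖x − x_t‖², and choose w_{t+1} ∈ argmin_{w ∈ D} Σ_{i=1}^t ℓ_i(w) for each t. Then for every x⋆ ∈ D: (a) Σ_{t=1}^T (ℓ_t(w_t) − ℓ_t(x⋆)) ≤ (μB + G)² (log T + 1)/(2μ), and (b) ℒ(x_T) − ℒ(x⋆) ≤ (μB + G)² (log T + 1)/(2μT). -/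
/-!
Each surrogate `ℓ t` is a `μ`-strongly convex quadratic, so the Follow-the-Leader objective
`F t = ℓ 1 + ⋯ + ℓ t` is `t μ`-strongly convex and grows quadratically away from its
constrained minimiser `w (t + 1)`. Since moreover `‖∇ℓ t (w t)‖ ≤ μ B + G`, the point `w t`
minimises `F t` up to `(μ B + G)² / (2 μ t)`, and the be-the-leader telescoping sums these
gaps to the harmonic bound (a). For (b), convexity of `ℒ` along the running averages, through
`w t - x t = (t - 1) (x t - x (t - 1))`, gives
`t ℒ(x t) - (t - 1) ℒ(x (t - 1)) - ℒ(x⋆) ≤ ℓ t (w t) - ℓ t x⋆`, which telescopes.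
-/

open scoped RealInnerProductSpace
open Finset Filter Topology

section NormedSpace

variable {E : Type*} [NormedAddCommGroup E] [NormedSpace ℝ E]

theorem StrongConvexOn.add {s : Set E} {f g : E → ℝ} {m n : ℝ}
    (hf : StrongConvexOn s m f) (hg : StrongConvexOn s n g) :
    StrongConvexOn s (m + n) (f + g) := by
  refine UniformConvexOn.mono (fun r ↦ le_of_eq ?_) (UniformConvexOn.add hf hg)
  simp only [Pi.add_apply]
  ring

theorem StrongConvexOn.sum {ι : Type*} {s : Set E} (hs : Convex ℝ s) {I : Finset ι}
    {f : ι → E → ℝ} {m : ι → ℝ} (h : ∀ i ∈ I, StrongConvexOn s (m i) (f i)) :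
    StrongConvexOn s (∑ i ∈ I, m i) (fun x ↦ ∑ i ∈ I, f i x) := by
  classical
  induction I using Finset.induction_on with
  | empty => simpa using convexOn_const (0 : ℝ) hs
  | insert a I ha ih =>
    simp only [sum_insert ha]
    exact (h a (mem_insert_self a I)).add (ih fun i hi ↦ h i (mem_insert_of_mem hi))

theorem StrongConvexOn.add_sq_norm_sub_le_of_isMinOn {s : Set E} {f : E → ℝ} {m : ℝ}
    {x y : E} (hf : StrongConvexOn s m f) (hmin : IsMinOn f s x) (hx : x ∈ s) (hy : y ∈ s) :
    f x + m / 2 * ‖y - x‖ ^ 2 ≤ f y := by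
  have hseg : ∀ a ∈ Set.Ioo (0 : ℝ) 1, (1 - a) * (m / 2 * ‖y - x‖ ^ 2) ≤ f y - f x := by
    rintro a ⟨ha0, ha1⟩
    have ha : (0 : ℝ) ≤ 1 - a := by linarith
    have hmid := hf.2 hx hy ha ha0.le (by ring)
    have hle := isMinOn_iff.mp hmin _ (hf.1 hx hy ha ha0.le (by ring))
    simp only [smul_eq_mul, norm_sub_rev x y] at hmid
    exact le_of_mul_le_mul_left (by linarith) ha0
  have hlim : Tendsto (fun a : ℝ ↦ (1 - a) * (m / 2 * ‖y - x‖ ^ 2)) (𝓝[>] 0)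
      (𝓝 (m / 2 * ‖y - x‖ ^ 2)) := by
    refine tendsto_nhdsWithin_of_tendsto_nhds ?_
    have := ((continuous_const.sub continuous_id).mul continuous_const).tendsto
      (f := fun a : ℝ ↦ (1 - a) * (m / 2 * ‖y - x‖ ^ 2)) 0
    simpa only [id, sub_zero, one_mul] using this
  have := le_of_tendsto hlim (by filter_upwards [Ioo_mem_nhdsGT one_pos] using hseg)
  linarith

theorem norm_add_smul_sub_le {g w c : E} {μ B G : ℝ} (hμ : 0 ≤ μ) (hg : ‖g‖ ≤ G)
    (hwc : ‖w - c‖ ≤ B) : ‖g + μ • (w - c)‖ ≤ μ * B + G := by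
  have htri := norm_add_le g (μ • (w - c))
  rw [norm_smul, Real.norm_of_nonneg hμ] at htri
  linarith [mul_le_mul_of_nonneg_left hwc hμ]

end NormedSpace

theorem Convex.inv_card_smul_sum_mem {V ι : Type*} [AddCommGroup V] [Module ℝ V] {D : Set V}
    (hD : Convex ℝ D) {s : Finset ι} (hs : s.Nonempty) {z : ι → V} (hz : ∀ i ∈ s, z i ∈ D) :
    (#s : ℝ)⁻¹ • ∑ i ∈ s, z i ∈ D := by
  rw [smul_sum]
  exact hD.sum_mem (fun _ _ ↦ by positivity) (by simp [hs.card_pos.ne']) hz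

theorem mul_sub_half_mul_sq_le (L r : ℝ) {c : ℝ} (hc : 0 < c) :
    L * r - c / 2 * r ^ 2 ≤ L ^ 2 / (2 * c) := by
  rw [le_div_iff₀ (by positivity)]
  nlinarith [sq_nonneg (L - c * r)]

theorem regret_le_sum_of_leader_gap_le {α : Type*} {ℓ : ℕ → α → ℝ} {w : ℕ → α} {D : Set α}
    {b : ℕ → ℝ} {T : ℕ} (hw : ∀ t ∈ Icc 1 T, w t ∈ D)
    (hgap : ∀ t ∈ Icc 1 T, ∀ v ∈ D, ∑ i ∈ Icc 1 t, ℓ i (w t) - ∑ i ∈ Icc 1 t, ℓ i v ≤ b t)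
    {v : α} (hv : v ∈ D) :
    ∑ t ∈ Icc 1 T, (ℓ t (w t) - ℓ t v) ≤ ∑ t ∈ Icc 1 T, b t := by
  induction T generalizing v with
  | zero => simp
  | succ T ih =>
    have hsub : Icc 1 T ⊆ Icc 1 (T + 1) := Icc_subset_Icc_right T.le_succ
    have hlast : T + 1 ∈ Icc 1 (T + 1) := mem_Icc.2 ⟨by omega, le_rfl⟩
    have hprev := ih (fun t ht ↦ hw t (hsub ht)) (fun t ht ↦ hgap t (hsub ht)) (hw _ hlast)
    have hstep := hgap _ hlast v hv
    rw [sum_Icc_succ_top (by omega), sum_Icc_succ_top (by omega)] at hstep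
    rw [sum_Icc_succ_top (by omega), sum_Icc_succ_top (by omega), sum_sub_distrib]
    rw [sum_sub_distrib] at hprev
    linarith

theorem sum_Icc_inv_le_log_add_one (T : ℕ) : ∑ t ∈ Icc 1 T, (t : ℝ)⁻¹ ≤ Real.log T + 1 := by
  have h := harmonic_le_one_add_log T
  rw [harmonic_eq_sum_Icc] at h
  push_cast at h
  linarith

section InnerProductSpace

variable {E : Type*} [NormedAddCommGroup E] [InnerProductSpace ℝ E]

noncomputable def quadSurrogate (g c : E) (μ : ℝ) (y : E) : ℝ := ⟪g, y⟫ + μ / 2 * ‖y - c‖ ^ 2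

theorem quadSurrogate_add (g c y d : E) (μ : ℝ) :
    quadSurrogate g c μ (y + d)
      = quadSurrogate g c μ y + ⟪g + μ • (y - c), d⟫ + μ / 2 * ‖d‖ ^ 2 := by
  simp only [quadSurrogate]
  rw [show y + d - c = (y - c) + d by abel, norm_add_sq_real, inner_add_right, inner_add_left,
    real_inner_smul_left]
  ring

theorem quadSurrogate_strongConvexOn (g c : E) (μ : ℝ) {s : Set E} (hs : Convex ℝ s) :
    StrongConvexOn s μ (quadSurrogate g c μ) := by
  have hlin : (fun y ↦ quadSurrogate g c μ y - μ / 2 * ‖y‖ ^ 2)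
      = fun y ↦ innerₛₗ ℝ (g - μ • c) y + μ / 2 * ‖c‖ ^ 2 := by
    funext y
    rw [quadSurrogate, innerₛₗ_apply_apply, norm_sub_sq_real, inner_sub_left,
      real_inner_smul_left, real_inner_comm c y]
    ring
  rw [strongConvexOn_iff_convex, hlin]
  exact ((innerₛₗ ℝ (g - μ • c)).convexOn hs).add (convexOn_const _ hs)

theorem quadSurrogate_sub_mul_norm_add_le {g c w v : E} {μ L : ℝ}
    (hL : ‖g + μ • (w - c)‖ ≤ L) :
    quadSurrogate g c μ w - L * ‖v - w‖ + μ / 2 * ‖v - w‖ ^ 2 ≤ quadSurrogate g c μ v := by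
  have hexp := quadSurrogate_add g c w (v - w) μ
  rw [add_sub_cancel] at hexp
  have hcs : -(L * ‖v - w‖) ≤ ⟪g + μ • (w - c), v - w⟫ :=
    calc -(L * ‖v - w‖) ≤ -(‖g + μ • (w - c)‖ * ‖v - w‖) := by gcongr
      _ ≤ ⟪g + μ • (w - c), v - w⟫ := neg_le_of_abs_le (abs_real_inner_le_norm _ _)
  linarith

theorem sum_quadSurrogate_gap_le_of_isMinOn {D : Set E} (hD : Convex ℝ D) {μ L : ℝ}
    (hμ : 0 < μ) {g c w : ℕ → E} {t : ℕ}
    (hmin : IsMinOn (fun v ↦ ∑ i ∈ Icc 1 t, quadSurrogate (g i) (c i) μ v) D (w (t + 1)))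
    (hw : w (t + 1) ∈ D) (hL : ‖g (t + 1) + μ • (w (t + 1) - c (t + 1))‖ ≤ L)
    {v : E} (hv : v ∈ D) :
    ∑ i ∈ Icc 1 (t + 1), quadSurrogate (g i) (c i) μ (w (t + 1))
      - ∑ i ∈ Icc 1 (t + 1), quadSurrogate (g i) (c i) μ v ≤ L ^ 2 / (2 * μ * (t + 1)) := by
  have hconv :
      StrongConvexOn D (t * μ) fun v ↦ ∑ i ∈ Icc 1 t, quadSurrogate (g i) (c i) μ v := by
    simpa using StrongConvexOn.sum (I := Icc 1 t) hD fun i _ ↦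
      quadSurrogate_strongConvexOn (g i) (c i) μ hD
  have hgrowth := hconv.add_sq_norm_sub_le_of_isMinOn hmin hw hv
  have hlast := quadSurrogate_sub_mul_norm_add_le (v := v) hL
  have hamgm := mul_sub_half_mul_sq_le L ‖v - w (t + 1)‖ (c := (t + 1) * μ) (by positivity)
  rw [sum_Icc_succ_top (by omega), sum_Icc_succ_top (by omega)]
  rw [show 2 * μ * (t + 1) = 2 * ((t + 1) * μ) by ring]
  linarith

theorem ftl_quadSurrogate_regret_le {D : Set E} (hD : Convex ℝ D) {μ L : ℝ} (hμ : 0 < μ)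
    {g c w : ℕ → E} {T : ℕ} (hw : ∀ t ∈ Icc 1 T, w t ∈ D)
    (hL : ∀ t ∈ Icc 1 T, ‖g t + μ • (w t - c t)‖ ≤ L)
    (hftl : ∀ t, 1 ≤ t → t < T →
      IsMinOn (fun v ↦ ∑ i ∈ Icc 1 t, quadSurrogate (g i) (c i) μ v) D (w (t + 1)))
    {u : E} (hu : u ∈ D) :
    ∑ t ∈ Icc 1 T, (quadSurrogate (g t) (c t) μ (w t) - quadSurrogate (g t) (c t) μ u)
      ≤ L ^ 2 * (Real.log T + 1) / (2 * μ) := by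
  have hgap : ∀ t ∈ Icc 1 T, ∀ v ∈ D,
      ∑ i ∈ Icc 1 t, quadSurrogate (g i) (c i) μ (w t)
        - ∑ i ∈ Icc 1 t, quadSurrogate (g i) (c i) μ v ≤ L ^ 2 / (2 * μ) * (t : ℝ)⁻¹ := by
    rintro (_ | t) ht v hv
    · simp at ht
    have hmin :
        IsMinOn (fun v ↦ ∑ i ∈ Icc 1 t, quadSurrogate (g i) (c i) μ v) D (w (t + 1)) := by
      rcases Nat.eq_zero_or_pos t with rfl | ht0
      · simp [isMinOn_const]
      · exact hftl t ht0 (by have := (mem_Icc.1 ht).2; omega)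
    convert sum_quadSurrogate_gap_le_of_isMinOn hD hμ hmin (hw _ ht) (hL _ ht) hv using 1
    push_cast
    field_simp
  refine (regret_le_sum_of_leader_gap_le hw hgap hu).trans ?_
  rw [← mul_sum, mul_div_right_comm]
  exact mul_le_mul_of_nonneg_left (sum_Icc_inv_le_log_add_one T) (by positivity)

theorem mul_sub_le_quadSurrogate_sub [CompleteSpace E] {f : E → ℝ} {μ : ℝ} (hμ : 0 ≤ μ)
    (hstrong : ∀ y δ : E, f (y + δ) ≥ f y + ⟪gradient f y, δ⟫ + μ / 2 * ‖δ‖ ^ 2)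
    {x x' w u : E} {k : ℝ} (hk : 0 ≤ k) (hw : w - x = k • (x - x')) :
    (k + 1) * f x - k * f x' - f u ≤
      quadSurrogate (gradient f x) x μ w - quadSurrogate (gradient f x) x μ u := by
  have hu := hstrong x (u - x)
  have hx' := hstrong x (x' - x)
  rw [add_sub_cancel] at hu hx'
  have hsupport : f x - f x' ≤ ⟪gradient f x, x - x'⟫ := by
    rw [← neg_sub x x', inner_neg_right] at hx'
    nlinarith [sq_nonneg ‖x - x'‖]
  have hconv : k * (f x - f x') ≤ ⟪gradient f x, w⟫ - ⟪gradient f x, x⟫ := by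
    rw [← inner_sub_right, hw, real_inner_smul_right]
    exact mul_le_mul_of_nonneg_left hsupport hk
  have hwx : 0 ≤ μ / 2 * ‖w - x‖ ^ 2 := by positivity
  rw [inner_sub_right] at hu
  simp only [quadSurrogate]
  linarith

theorem sub_eq_smul_sub_of_smul_eq_sum {w x : ℕ → E} {t : ℕ}
    (ht : (t : ℝ) • x t = ∑ i ∈ Icc 1 t, w i)
    (ht' : ((t + 1 : ℕ) : ℝ) • x (t + 1) = ∑ i ∈ Icc 1 (t + 1), w i) :
    w (t + 1) - x (t + 1) = (t : ℝ) • (x (t + 1) - x t) := by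
  rw [sum_Icc_succ_top (by omega), ← ht] at ht'
  have hw : w (t + 1) = ((t : ℝ) + 1) • x (t + 1) - (t : ℝ) • x t := by
    rw [← Nat.cast_succ, ht']
    abel
  rw [hw]
  module

theorem mul_sub_le_sum_quadSurrogate_sub [CompleteSpace E] {f : E → ℝ} {μ : ℝ} (hμ : 0 ≤ μ)
    (hstrong : ∀ y δ : E, f (y + δ) ≥ f y + ⟪gradient f y, δ⟫ + μ / 2 * ‖δ‖ ^ 2)
    {w x : ℕ → E} {T : ℕ} (hx : ∀ t ≤ T, (t : ℝ) • x t = ∑ i ∈ Icc 1 t, w i) (u : E) :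
    T * (f (x T) - f u) ≤ ∑ t ∈ Icc 1 T, (quadSurrogate (gradient f (x t)) (x t) μ (w t)
      - quadSurrogate (gradient f (x t)) (x t) μ u) := by
  induction T with
  | zero => simp
  | succ T ih =>
    have hprev := ih fun t ht ↦ hx t (by omega)
    have hlast := mul_sub_le_quadSurrogate_sub hμ hstrong (u := u) T.cast_nonneg
      (sub_eq_smul_sub_of_smul_eq_sum (hx T (by omega)) (hx (T + 1) le_rfl))
    rw [sum_Icc_succ_top (by omega)]
    push_cast
    linarith

end InnerProductSpace

theorem ftl_strongly_convex_general
    {E : Type*} [NormedAddCommGroup E] [InnerProductSpace ℝ E] [CompleteSpace E]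
    (D : Set E) (hDconv : Convex ℝ D)
    (B : ℝ) (hdiam : ∀ u ∈ D, ∀ v ∈ D, ‖u - v‖ ≤ B)
    (μ G : ℝ) (hμ : 0 < μ)
    (f : E → ℝ)
    (hstrong : ∀ y δ : E, f (y + δ) ≥ f y + ⟪gradient f y, δ⟫ + μ / 2 * ‖δ‖ ^ 2)
    (hgradbound : ∀ y ∈ D, ‖gradient f y‖ ≤ G)
    (T : ℕ) (hT : 1 ≤ T)
    (w : ℕ → E) (hw1 : w 1 ∈ D)
    (x : ℕ → E)
    (hx : ∀ t, 1 ≤ t → t ≤ T → x t = (t : ℝ)⁻¹ • ∑ i ∈ Finset.Icc 1 t, w i)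
    (ℓ : ℕ → E → ℝ)
    (hℓ : ∀ t, 1 ≤ t → t ≤ T → ∀ y : E,
      ℓ t y = ⟪gradient f (x t), y⟫ + μ / 2 * ‖y - x t‖ ^ 2)
    (hftl : ∀ t, 1 ≤ t → t < T → w (t + 1) ∈ D ∧
      ∀ v ∈ D, ∑ i ∈ Finset.Icc 1 t, ℓ i (w (t + 1)) ≤ ∑ i ∈ Finset.Icc 1 t, ℓ i v)
    (xstar : E) (hxstar : xstar ∈ D) :
    (∑ t ∈ Finset.Icc 1 T, (ℓ t (w t) - ℓ t xstar)
        ≤ (μ * B + G) ^ 2 * (Real.log T + 1) / (2 * μ)) ∧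
    (f (x T) - f xstar ≤ (μ * B + G) ^ 2 * (Real.log T + 1) / (2 * μ * T)) := by
  have hℓq : ∀ t ∈ Icc 1 T, ℓ t = quadSurrogate (gradient f (x t)) (x t) μ := fun t ht ↦
    funext (hℓ t (mem_Icc.1 ht).1 (mem_Icc.1 ht).2)
  have hℓq_sum : ∀ t ≤ T, ∀ v, ∑ i ∈ Icc 1 t, ℓ i v
      = ∑ i ∈ Icc 1 t, quadSurrogate (gradient f (x i)) (x i) μ v := fun t ht v ↦
    sum_congr rfl fun i hi ↦ by rw [hℓq i (Icc_subset_Icc_right ht hi)]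
  have hwD : ∀ t ∈ Icc 1 T, w t ∈ D := by
    rintro (_ | _ | t) ht
    · simp at ht
    · exact hw1
    · exact (hftl (t + 1) (by omega) (mem_Icc.1 ht).2).1
  have hxD : ∀ t ∈ Icc 1 T, x t ∈ D := fun t ht ↦ by
    simpa [hx t (mem_Icc.1 ht).1 (mem_Icc.1 ht).2] using hDconv.inv_card_smul_sum_mem
      (nonempty_Icc.2 (mem_Icc.1 ht).1) fun i hi ↦ hwD i (Icc_subset_Icc_right (mem_Icc.1 ht).2 hi)
  have hsum : ∀ t ≤ T, (t : ℝ) • x t = ∑ i ∈ Icc 1 t, w i := by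
    rintro (_ | t) ht
    · simp
    · rw [hx (t + 1) (by omega) ht, smul_smul, mul_inv_cancel₀ (by positivity), one_smul]
  have hregret := ftl_quadSurrogate_regret_le hDconv hμ hwD (fun t ht ↦ norm_add_smul_sub_le
    hμ.le (hgradbound _ (hxD t ht)) (hdiam _ (hwD t ht) _ (hxD t ht))) (fun t ht1 htT ↦
      isMinOn_iff.2 fun v hv ↦ by simpa only [hℓq_sum t htT.le] using (hftl t ht1 htT).2 v hv)
    hxstar
  have hbatch := mul_sub_le_sum_quadSurrogate_sub hμ.le hstrong hsum xstar
  refine ⟨by rwa [sum_congr rfl fun t ht ↦ by rw [hℓq t ht]], ?_⟩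
  rw [← div_div, le_div_iff₀ (by positivity), mul_comm]
  exact hbatch.trans hregret

/-- Corollary 6, deterministic version: strongly convex losses with
Follow-the-Leader, unit weights. -/
theorem ftl_strongly_convex
    {E : Type*} [NormedAddCommGroup E] [InnerProductSpace ℝ E] [CompleteSpace E]
    (D : Set E) (hDconv : Convex ℝ D) (hDcomp : IsCompact D)
    (B : ℝ) (hdiam : ∀ u ∈ D, ∀ v ∈ D, ‖u - v‖ ≤ B)
    (μ G : ℝ) (hμ : 0 < μ)
    (f : E → ℝ) (hdiff : Differentiable ℝ f)
    (hstrong : ∀ y δ : E, f (y + δ) ≥ f y + ⟪gradient f y, δ⟫ + μ / 2 * ‖δ‖ ^ 2)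
    (hgradbound : ∀ y ∈ D, ‖gradient f y‖ ≤ G)
    (T : ℕ) (hT : 1 ≤ T)
    (w : ℕ → E) (hw1 : w 1 ∈ D)
    (x : ℕ → E)
    (hx : ∀ t, 1 ≤ t → t ≤ T → x t = (t : ℝ)⁻¹ • ∑ i ∈ Finset.Icc 1 t, w i)
    (ℓ : ℕ → E → ℝ)
    (hℓ : ∀ t, 1 ≤ t → t ≤ T → ∀ y : E,
      ℓ t y = ⟪gradient f (x t), y⟫ + μ / 2 * ‖y - x t‖ ^ 2)
    (hftl : ∀ t, 1 ≤ t → t < T → w (t + 1) ∈ D ∧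
      ∀ v ∈ D, ∑ i ∈ Finset.Icc 1 t, ℓ i (w (t + 1)) ≤ ∑ i ∈ Finset.Icc 1 t, ℓ i v)
    (xstar : E) (hxstar : xstar ∈ D) :
    (∑ t ∈ Finset.Icc 1 T, (ℓ t (w t) - ℓ t xstar)
        ≤ (μ * B + G) ^ 2 * (Real.log T + 1) / (2 * μ)) ∧
    (f (x T) - f xstar ≤ (μ * B + G) ^ 2 * (Real.log T + 1) / (2 * μ * T)) :=
  ftl_strongly_convex_general D hDconv B hdiam μ G hμ f hstrong hgradbound T hT w hw1 x hx ℓ hℓ hftl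
    xstar hxstar
end
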